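/- arXiv:1409.7363 — 4 statements merged into one kernel-verified Lean document; each statement's English description precedes it below -/
import Mathlib

section
/- For X = ℝ^ℕ with the product topology and pointwise multiplication, the multiplication map σ(x,y) = xy is not n-bounded: there exist no neighborhoods U, V of zero in X such that σ(U,V) is bounded in X. -/
/-! A zero neighbourhood of `ℝ^ℕ` restricts only finitely many coordinates, so `U` and `V` both
contain the whole `n`-th coordinate line for some `n`, and then so does `σ(U, V)`. A set containing a
coordinate line is unbounded: every zero neighbourhood contains `ε eₙ` for some `ε ≠ 0`, and
`ε eₙ · (2 / ε) eₙ = 2 eₙ` escapes the neighbourhood `{x | |xₙ| < 1}`. -/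

abbrev RN : Type := ℕ → ℝ

/-- `B` is bounded in the topological module sense (`RN` over itself). -/
def RNBdd (B : Set RN) : Prop :=
  ∀ W ∈ nhds (0 : RN), ∃ V ∈ nhds (0 : RN), ∀ v ∈ V, ∀ b ∈ B, v * b ∈ W

open Filter Topology

section CoordinateLines

variable {ι : Type*} [DecidableEq ι] {X : ι → Type*} [∀ i, TopologicalSpace (X i)]
  [∀ i, Zero (X i)]

theorem eventually_cofinite_forall_single_mem {U : Set (∀ i, X i)} (hU : U ∈ 𝓝 0) :
    ∀ᶠ n in cofinite, ∀ c : X n, Pi.single n c ∈ U := by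
  rw [nhds_pi, mem_pi] at hU
  obtain ⟨I, hI, t, ht, hIU⟩ := hU
  filter_upwards [hI.compl_mem_cofinite] with n hn c
  refine hIU fun i hi => ?_
  have hin : i ≠ n := by rintro rfl; exact hn hi
  simpa [Pi.single_apply, hin] using mem_of_mem_nhds (ht i)

theorem exists_ne_zero_single_mem {U : Set (∀ i, X i)} (hU : U ∈ 𝓝 0) (n : ι)
    [(𝓝[≠] (0 : X n)).NeBot] : ∃ c : X n, c ≠ 0 ∧ Pi.single n c ∈ U := by
  have hsingle : ∀ᶠ c in 𝓝 (0 : X n), Pi.single n c ∈ U :=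
    (continuous_single n).tendsto' 0 0 (Pi.single_zero n) hU
  have hpunctured : ∀ᶠ c in 𝓝[≠] (0 : X n), c ≠ 0 ∧ Pi.single n c ∈ U :=
    Eventually.and self_mem_nhdsWithin (nhdsWithin_le_nhds hsingle)
  exact hpunctured.exists

end CoordinateLines

theorem not_rnBdd_of_forall_single_mem {B : Set RN} {n : ℕ} (hB : ∀ r : ℝ, Pi.single n r ∈ B) :
    ¬ RNBdd B := by
  intro hbdd
  have hW : (fun x : RN => x n) ⁻¹' Set.Ioo (-1) 1 ∈ 𝓝 (0 : RN) :=
    (continuous_apply n).continuousAt.preimage_mem_nhds (Ioo_mem_nhds (by norm_num) (by norm_num))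
  obtain ⟨V, hV, hVB⟩ := hbdd _ hW
  obtain ⟨ε, hε, hεV⟩ := exists_ne_zero_single_mem hV n
  have hprod := hVB _ hεV _ (hB (2 / ε))
  rw [← Pi.single_mul, mul_div_cancel₀ 2 hε] at hprod
  norm_num at hprod

/-- Pointwise multiplication on ℝ^ℕ is not n-bounded. -/
theorem stmt1 :
    ¬ ∃ U ∈ nhds (0 : RN), ∃ V ∈ nhds (0 : RN),
      RNBdd (Set.image2 (fun x y : RN => x * y) U V) := by
  rintro ⟨U, hU, V, hV, hbdd⟩
  obtain ⟨n, hnU, hnV⟩ :=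
    ((eventually_cofinite_forall_single_mem hU).and (eventually_cofinite_forall_single_mem hV)).exists
  refine not_rnBdd_of_forall_single_mem (n := n) (fun r => ?_) hbdd
  exact ⟨_, hnU r, _, hnV 1, by simp only [← Pi.single_mul, mul_one]⟩
end

section
/- Let X = ℓ^∞ with the uniform norm topology and Y = ℓ^∞ with the topology induced from the product topology of ℝ^ℕ (coordinate-wise topology), both with pointwise multiplication. The multiplication map σ: X × Y → Y, σ(x,y) = xy, is not n-bounded: for every zero neighborhood U ⊆ X and every zero neighborhood V ⊆ Y, σ(U,V) is not bounded in Y. -/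
open scoped ENNReal
open Filter Topology

/-!
A zero neighbourhood in the coordinate-wise topology constrains only finitely many coordinates,
so `V` contains the whole line `ℝ eₙ` for some `n`, and since `U` contains a nonzero multiple
of `eₙ`, so does `σ(U, V)`. But every coordinate neighbourhood `V'` contains some `c eₙ` with
`c ≠ 0`, and `c eₙ · ℝ eₙ = ℝ eₙ` is not contained in `{y | |yₙ| < 1}`.
-/

/-- `ℓ^∞`: the space of bounded real sequences with the sup norm. -/
abbrev Linf : Type := lp (fun _ : ℕ => ℝ) ∞

/-- Module-sense boundedness in `ℓ^∞` with the norm topology, over itself. -/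
def LinfBdd (B : Set Linf) : Prop :=
  ∀ W ∈ nhds (0 : Linf), ∃ V ∈ nhds (0 : Linf), ∀ v ∈ V, ∀ b ∈ B, v * b ∈ W

/-- `W` is a zero neighborhood of `ℓ^∞` in the coordinate-wise (product) topology. -/
def CoordNhd (W : Set Linf) : Prop :=
  ∃ Wp ∈ nhds (0 : ℕ → ℝ), {y : Linf | (y : ℕ → ℝ) ∈ Wp} ⊆ W

/-- Module-sense boundedness in `ℓ^∞` with the coordinate-wise topology, over itself. -/
def CoordBdd (B : Set Linf) : Prop :=
  ∀ W, CoordNhd W → ∃ V, CoordNhd V ∧ ∀ v ∈ V, ∀ b ∈ B, v * b ∈ W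

theorem exists_ne_of_eventually_nhds {X : Type*} [TopologicalSpace X] {a : X} [(𝓝[{a}ᶜ] a).NeBot]
    {p : X → Prop} (h : ∀ᶠ x in 𝓝 a, p x) : ∃ x ≠ a, p x := by
  obtain ⟨x, hx, hxa⟩ := ((eventually_nhdsWithin_of_eventually_nhds h).and
    (self_mem_nhdsWithin : {a}ᶜ ∈ 𝓝[{a}ᶜ] a)).exists
  exact ⟨x, hxa, hx⟩

theorem lp.single_mul_single_infty {I : Type*} [DecidableEq I] {B : I → Type*}
    [∀ i, NonUnitalNormedRing (B i)] (i : I) (a b : B i) :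
    lp.single ∞ i a * lp.single ∞ i b = lp.single ∞ i (a * b) := by
  ext j
  simp only [lp.infty_coeFn_mul, lp.coeFn_single, Pi.single_mul, Pi.mul_apply]

theorem eventually_single_mem_of_mem_nhds {U : Set Linf} (hU : U ∈ 𝓝 0) (n : ℕ) :
    ∀ᶠ t in 𝓝 (0 : ℝ), lp.single ∞ n t ∈ U :=
  (lp.isometry_single n).continuous.tendsto' 0 0 (lp.single_zero _ _) hU

theorem coordNhd_setOf_abs_apply_lt (n : ℕ) {r : ℝ} (hr : 0 < r) :
    CoordNhd {y : Linf | |y n| < r} :=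
  ⟨{p | |p n| < r},
    (isOpen_lt (continuous_abs.comp (continuous_apply n)) continuous_const).mem_nhds
      (by simpa using hr),
    fun _ hy => hy⟩

namespace CoordNhd

variable {V : Set Linf}

theorem eventually_single_mem (hV : CoordNhd V) (n : ℕ) :
    ∀ᶠ t in 𝓝 (0 : ℝ), lp.single ∞ n t ∈ V := by
  obtain ⟨Wp, hWp, hsub⟩ := hV
  filter_upwards [(continuous_single (A := fun _ : ℕ => ℝ) n).tendsto' 0 0 (Pi.single_zero n) hWp]
    with t ht using hsub ht

theorem exists_forall_single_mem (hV : CoordNhd V) : ∃ n, ∀ t : ℝ, lp.single ∞ n t ∈ V := by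
  obtain ⟨Wp, hWp, hsub⟩ := hV
  rw [nhds_pi] at hWp
  obtain ⟨I, hI, s, hs, hIs⟩ := mem_pi.mp hWp
  obtain ⟨n, hn⟩ := hI.infinite_compl.nonempty
  refine ⟨n, fun t => hsub (hIs fun i hi => ?_)⟩
  have hin : i ≠ n := fun h => hn (h ▸ hi)
  simpa [Pi.single_eq_of_ne hin] using mem_of_mem_nhds (hs i)

end CoordNhd

/-- The multiplication σ : ℓ^∞(norm) × ℓ^∞(coord) → ℓ^∞(coord) is not n-bounded. -/
theorem stmt3 :
    ∀ U ∈ nhds (0 : Linf), ∀ V : Set Linf, CoordNhd V →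
      ¬ CoordBdd (Set.image2 (fun x y : Linf => x * y) U V) := by
  intro U hU V hV hB
  obtain ⟨n, hnV⟩ := hV.exists_forall_single_mem
  obtain ⟨V', hV', hbd⟩ := hB _ (coordNhd_setOf_abs_apply_lt n one_pos)
  obtain ⟨a, ha, haU⟩ := exists_ne_of_eventually_nhds (eventually_single_mem_of_mem_nhds hU n)
  obtain ⟨c, hc, hcV'⟩ := exists_ne_of_eventually_nhds (hV'.eventually_single_mem n)
  have h := hbd _ hcV' _ (Set.mem_image2_of_mem haU (hnV (a * c)⁻¹))
  rw [Set.mem_ofPred_eq, lp.single_mul_single_infty, lp.single_mul_single_infty,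
    lp.single_apply_self, show c * (a * (a * c)⁻¹) = 1 by field_simp] at h
  norm_num at h
end

section
/- Let X = ℓ^∞ with the uniform norm topology and pointwise product, and Y = ℓ^∞ with the norm topology and zero multiplication. The map σ: X × Y → X, σ(x,y) = xy, is not n/2-bounded: for every zero neighborhood U ⊆ X there is a bounded subset B ⊆ Y (every subset of Y is bounded since Y has zero multiplication) such that σ(U,B) is unbounded in X. Concretely, for the sequence aₙ = (1/ε, 2/ε, …, n/ε, 0, …) ∈ Y, the set σ(N_ε(0), {aₙ : n ∈ ℕ}) contains the unbounded set {(1,2,…,n,0,…) : n ∈ ℕ}. -/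
/-!
Module-sense boundedness in `ℓ^∞` implies norm boundedness: some multiple `c • 1`, `c > 0`,
maps the set into the unit ball. Every zero neighborhood `U` contains such a `c • 1`, and
against `B = {n • 1 | n : ℕ}` it produces the elements `(c n) • 1`, whose norms are unbounded.
-/

open scoped ENNReal

lemma Linf.norm_smul_one (c : ℝ) : ‖c • (1 : Linf)‖ = |c| := by
  rw [norm_smul, norm_one, mul_one, Real.norm_eq_abs]

lemma Linf.smul_one_mem_of_mem_nhds {U : Set Linf} (hU : U ∈ nhds 0) :
    ∃ c : ℝ, 0 < c ∧ c • (1 : Linf) ∈ U := by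
  obtain ⟨ε, hε, hball⟩ := Metric.mem_nhds_iff.1 hU
  refine ⟨ε / 2, half_pos hε, hball ?_⟩
  rw [Metric.mem_ball, dist_zero_right, Linf.norm_smul_one, abs_of_pos (half_pos hε)]
  exact half_lt_self hε

lemma LinfBdd.isBounded {S : Set Linf} (h : LinfBdd S) : Bornology.IsBounded S := by
  obtain ⟨V, hV, hVS⟩ := h (Metric.ball 0 1) (Metric.ball_mem_nhds 0 one_pos)
  obtain ⟨c, hc, hcV⟩ := Linf.smul_one_mem_of_mem_nhds hV
  refine isBounded_iff_forall_norm_le.2 ⟨c⁻¹, fun b hb => ?_⟩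
  have hcb : ‖c • b‖ < 1 := by
    simpa [smul_mul_assoc] using hVS _ hcV b hb
  rw [norm_smul, Real.norm_of_nonneg hc.le] at hcb
  simpa using (le_inv_mul_iff₀ hc (b := 1)).2 (by simpa using hcb.le)

lemma Linf.not_isBounded_image2_mul_range_natCast_smul_one {c : ℝ} (hc : 0 < c) :
    ¬ Bornology.IsBounded
      (Set.image2 (fun x y : Linf => x * y) {c • 1} (Set.range fun n : ℕ => (n : ℝ) • 1)) := by
  intro h
  obtain ⟨C, hC⟩ := isBounded_iff_forall_norm_le.1 h
  obtain ⟨n, hn⟩ := exists_nat_gt (C / c)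
  have hnorm := hC _ (Set.mem_image2_of_mem rfl ⟨n, rfl⟩)
  rw [smul_mul_smul_comm, one_mul, Linf.norm_smul_one, abs_of_nonneg (by positivity)] at hnorm
  rw [div_lt_iff₀' hc] at hn
  linarith

/-- σ(x,y) = xy : ℓ^∞ × Y → ℓ^∞ (Y with zero multiplication, so every subset of Y is
bounded) is not n/2-bounded: every zero neighborhood U admits a set B with σ(U,B)
unbounded in ℓ^∞. -/
theorem stmt5 :
    ∀ U ∈ nhds (0 : Linf), ∃ B : Set Linf,
      ¬ LinfBdd (Set.image2 (fun x y : Linf => x * y) U B) := by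
  intro U hU
  obtain ⟨c, hc, hcU⟩ := Linf.smul_one_mem_of_mem_nhds hU
  refine ⟨Set.range fun n : ℕ => (n : ℝ) • 1, fun h => ?_⟩
  exact Linf.not_isBounded_image2_mul_range_natCast_smul_one hc
    (h.isBounded.subset (Set.image2_subset (Set.singleton_subset_iff.2 hcU) subset_rfl))
end

section
/- Let X = ℓ^∞ with sup-norm topology and pointwise product, Y = ℓ^∞ with the coordinate-wise (product) topology and pointwise product. The multiplication σ: X × Y → Y, σ(x,y) = xy, is n/2-bounded: there is a zero neighborhood U ⊆ X (e.g., the unit ball) such that σ(U,B) is bounded in Y for every bounded set B ⊆ Y. -/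
open scoped ENNReal

/-!
A zero neighbourhood of the product topology restricts only finitely many coordinates, while
small positive constant sequences lie in every such neighbourhood; hence a set is bounded in
`ℓ^∞` with the coordinate-wise topology exactly when each of its coordinates is bounded.
Multiplying by an element of the unit ball of `ℓ^∞` shrinks every coordinate, so it preserves
coordinate-wise bounds.
-/

lemma exists_finite_pi_ball_subset_of_mem_nhds_zero {ι : Type*} {s : Set (ι → ℝ)}
    (hs : s ∈ nhds 0) :
    ∃ I : Set ι, I.Finite ∧ ∃ ε : ι → ℝ, (∀ i ∈ I, 0 < ε i) ∧
      I.pi (fun i => Metric.ball 0 (ε i)) ⊆ s := by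
  rw [nhds_pi] at hs
  obtain ⟨⟨I, ε⟩, ⟨hI, hε⟩, hsub⟩ :=
    (Filter.hasBasis_pi fun _ => Metric.nhds_basis_ball).mem_iff.mp hs
  exact ⟨I, hI, ε, hε, hsub⟩

lemma coordBdd_of_forall_abs_le {B : Set Linf} (M : ℕ → ℝ)
    (hB : ∀ b ∈ B, ∀ i, |(b : ℕ → ℝ) i| ≤ M i) : CoordBdd B := by
  rintro W ⟨Wp, hWp, hWsub⟩
  obtain ⟨I, hI, ε, hε, hεsub⟩ := exists_finite_pi_ball_subset_of_mem_nhds_zero hWp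
  have hV : ∀ᶠ f : ℕ → ℝ in nhds 0, ∀ i ∈ I, |f i| * M i < ε i := by
    refine (Filter.eventually_all_finite hI).mpr fun i hi => ?_
    exact (((continuous_apply i).abs.mul continuous_const).tendsto' 0 _ (by simp))
      |>.eventually_lt_const (hε i hi)
  refine ⟨{v | ∀ i ∈ I, |(v : ℕ → ℝ) i| * M i < ε i}, ⟨_, hV, fun v hv => hv⟩, ?_⟩
  intro v hv b hb
  refine hWsub (hεsub fun i hi => ?_)
  rw [Metric.mem_ball, dist_zero_right, lp.infty_coeFn_mul, Pi.mul_apply, Real.norm_eq_abs,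
    abs_mul]
  exact (mul_le_mul_of_nonneg_left (hB b hb i) (abs_nonneg _)).trans_lt (hv i hi)

lemma exists_abs_le_of_coordBdd {B : Set Linf} (hB : CoordBdd B) (i : ℕ) :
    ∃ M, ∀ b ∈ B, |(b : ℕ → ℝ) i| ≤ M := by
  have hW : CoordNhd {y | |(y : ℕ → ℝ) i| < 1} :=
    ⟨{f | |f i| < 1},
      ((continuous_apply i).abs.tendsto' 0 _ (by simp)).eventually_lt_const one_pos,
      fun _ hy => hy⟩
  obtain ⟨V, ⟨Vp, hVp, hVsub⟩, hVB⟩ := hB _ hW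
  -- Small positive constant sequences lie in `V`, and multiplying by one bounds `|b i|`.
  have hconst : Filter.Tendsto (fun c : ℝ => fun _ : ℕ => c) (nhdsWithin 0 (Set.Ioi 0))
      (nhds 0) :=
    tendsto_nhdsWithin_of_tendsto_nhds (continuous_pi fun _ => continuous_id).continuousAt
  obtain ⟨c, hcV, hc⟩ := ((hconst.eventually_mem hVp).and self_mem_nhdsWithin).exists
  have hcoe : ((c • 1 : Linf) : ℕ → ℝ) = fun _ => c := by
    ext; simp [lp.coeFn_smul, lp.infty_coeFn_one]
  refine ⟨1 / c, fun b hb => ?_⟩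
  have hcb : |c * (b : ℕ → ℝ) i| < 1 := by
    have := hVB (c • 1) (hVsub (show _ ∈ Vp by rwa [hcoe])) b hb
    rwa [Set.mem_ofPred_eq, lp.infty_coeFn_mul, hcoe] at this
  rw [abs_mul, abs_of_pos hc] at hcb
  rw [le_div_iff₀ hc]
  linarith

theorem coordBdd_iff_forall_exists_abs_le {B : Set Linf} :
    CoordBdd B ↔ ∀ i, ∃ M, ∀ b ∈ B, |(b : ℕ → ℝ) i| ≤ M :=
  ⟨exists_abs_le_of_coordBdd, fun h => by
    choose M hM using h
    exact coordBdd_of_forall_abs_le M fun b hb i => hM i b hb⟩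

/-- The multiplication σ : ℓ^∞(norm) × ℓ^∞(coord) → ℓ^∞(coord) is n/2-bounded: there is
a zero neighborhood U in the norm topology with σ(U,B) coordinate-wise bounded for
every coordinate-wise bounded B. -/
theorem stmt18 :
    ∃ U ∈ nhds (0 : Linf), ∀ B : Set Linf, CoordBdd B →
      CoordBdd (Set.image2 (fun x y : Linf => x * y) U B) := by
  refine ⟨Metric.ball 0 1, Metric.ball_mem_nhds 0 one_pos, fun B hB => ?_⟩
  rw [coordBdd_iff_forall_exists_abs_le] at hB ⊢
  refine fun i => (hB i).imp fun M hM => ?_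
  rintro _ ⟨x, hx, y, hy, rfl⟩
  have hxi : |(x : ℕ → ℝ) i| ≤ 1 :=
    (lp.norm_apply_le_norm ENNReal.top_ne_zero x i).trans (mem_ball_zero_iff.mp hx).le
  rw [lp.infty_coeFn_mul, Pi.mul_apply, abs_mul]
  exact (mul_le_of_le_one_left (abs_nonneg _) hxi).trans (hM y hy)
end
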